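/- If every proper induced subcomplex of a finite simplicial complex K is pure, then K is shellable. -/

import Mathlib

open Finset

variable {V : Type*} [DecidableEq V]

/-- A (finite abstract) simplicial complex: a finset of finsets closed under subsets. -/
def IsComplex (K : Finset (Finset V)) : Prop :=
  ∀ F ∈ K, ∀ G ⊆ F, G ∈ K

/-- The facets (maximal faces) of a complex. -/
def facets (K : Finset (Finset V)) : Finset (Finset V) := by
  classical exact K.filter (fun F => ∀ G ∈ K, F ⊆ G → F = G)

/-- `L` is a shelling order of the facets of `K`: for each `i ≥ 2` (0-indexed `i ≥ 1`),
the intersection of the closed simplex on `F_i` with the union of the previous closed simplices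
is pure of dimension `dim F_i - 1`: every face `G` of the intersection is contained in a face `H`
of the intersection with `H.card = F_i.card - 1`. -/
def IsShelling (K : Finset (Finset V)) (L : List (Finset V)) : Prop :=
  L.Nodup ∧ L.toFinset = facets K ∧
  ∀ i : Fin L.length, i.1 ≠ 0 → ∀ G ⊆ L.get i,
    (∃ j : Fin L.length, j < i ∧ G ⊆ L.get j) →
    ∃ H, G ⊆ H ∧ H ⊆ L.get i ∧ H.card + 1 = (L.get i).card ∧
      ∃ j : Fin L.length, j < i ∧ H ⊆ L.get j

/-- A complex is shellable if it admits a shelling order of its facets. -/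
def Shellable (K : Finset (Finset V)) : Prop := ∃ L, IsShelling K L

/-- The subcomplex of `K` induced by a vertex subset `U`. -/
def inducedSub (K : Finset (Finset V)) (U : Finset V) : Finset (Finset V) :=
  K.filter (fun F => F ⊆ U)

/-- The vertex set of a complex. -/
def verts (K : Finset (Finset V)) : Finset V := K.sup id

/-- The link of a vertex `v` in `K`. -/
def link (K : Finset (Finset V)) (v : V) : Finset (Finset V) :=
  K.filter (fun F => v ∉ F ∧ insert v F ∈ K)

/-- A complex is pure if all of its facets have the same dimension. -/
def IsPure (K : Finset (Finset V)) : Prop :=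
  ∀ F ∈ facets K, ∀ G ∈ facets K, F.card = G.card

lemma mem_facets_iff {K : Finset (Finset V)} {F : Finset V} :
    F ∈ facets K ↔ F ∈ K ∧ ∀ G ∈ K, F ⊆ G → F = G := by
  classical constructor
  · intro h
    have := Finset.mem_filter.1 h
    exact ⟨this.1, this.2⟩
  · intro h
    exact Finset.mem_filter.2 h

lemma facets_subset {K : Finset (Finset V)} {F : Finset V} (h : F ∈ facets K) : F ∈ K :=
  (mem_facets_iff.1 h).1

lemma exists_facet {K : Finset (Finset V)} {I : Finset V} (hI : I ∈ K) :
    ∃ H ∈ facets K, I ⊆ H := by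
  classical
  obtain ⟨H, hH, hmax⟩ := (K.filter (fun J => I ⊆ J)).exists_max_image Finset.card
    ⟨I, by simp [hI]⟩
  rw [Finset.mem_filter] at hH
  refine ⟨H, mem_facets_iff.2 ⟨hH.1, fun G hG hHG => ?_⟩, hH.2⟩
  have hG' : G ∈ K.filter (fun J => I ⊆ J) :=
    Finset.mem_filter.2 ⟨hG, hH.2.trans hHG⟩
  exact Finset.eq_of_subset_of_card_le hHG (hmax G hG')

lemma subset_verts {K : Finset (Finset V)} {F : Finset V} (h : F ∈ K) : F ⊆ verts K :=
  Finset.le_sup (f := id) h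

lemma facet_inducedSub {K : Finset (Finset V)} {U F : Finset V}
    (hF : F ∈ facets K) (hFU : F ⊆ U) : F ∈ facets (inducedSub K U) := by
  rw [mem_facets_iff] at hF ⊢
  refine ⟨Finset.mem_filter.2 ⟨hF.1, hFU⟩, fun G hG hFG => ?_⟩
  exact hF.2 G (Finset.mem_filter.1 hG).1 hFG

lemma exchange {K : Finset (Finset V)} (hK : IsComplex K)
    (hind : ∀ U ⊂ verts K, IsPure (inducedSub K U))
    {I F : Finset V} (hI : I ∈ K) (hF : F ∈ facets K)
    (hcard : I.card < F.card) (hssub : I ∪ F ⊂ verts K) :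
    ∃ x ∈ F, x ∉ I ∧ insert x I ∈ K := by
  have hpure := hind _ hssub
  have hFf : F ∈ facets (inducedSub K (I ∪ F)) :=
    facet_inducedSub hF Finset.subset_union_right
  have hIm : I ∈ inducedSub K (I ∪ F) :=
    Finset.mem_filter.2 ⟨hI, Finset.subset_union_left⟩
  obtain ⟨H, hH, hIH⟩ := exists_facet hIm
  have hcardH : H.card = F.card := hpure H hH F hFf
  have hne : I ≠ H := by
    intro h; rw [h] at hcard; omega
  obtain ⟨x, hxH, hxI⟩ := Finset.exists_of_ssubset (hIH.ssubset_of_ne hne)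
  have hHm := Finset.mem_filter.1 (facets_subset hH)
  have hxF : x ∈ F := (Finset.mem_union.1 (hHm.2 hxH)).resolve_left hxI
  exact ⟨x, hxF, hxI, hK H hHm.1 _ (Finset.insert_subset hxH hIH)⟩

lemma growth {K : Finset (Finset V)} (hK : IsComplex K)
    (hind : ∀ U ⊂ verts K, IsPure (inducedSub K U))
    {F W : Finset V} (hF : F ∈ facets K) (hW : W ⊂ verts K) :
    ∀ n (I : Finset V), I ∈ K → I.card + n = F.card → I ∪ F ⊆ W →
      ∃ C ∈ K, I ⊆ C ∧ C ⊆ I ∪ F ∧ C.card = F.card := by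
  intro n
  induction n with
  | zero =>
    intro I hI hc _
    exact ⟨I, hI, subset_rfl, Finset.subset_union_left, by omega⟩
  | succ n ih =>
    intro I hI hc hsub
    obtain ⟨x, hxF, hxI, hins⟩ := exchange hK hind hI hF (by omega)
      (lt_of_le_of_lt hsub hW)
    have hsub' : insert x I ∪ F ⊆ I ∪ F := by
      intro y hy
      rcases Finset.mem_union.1 hy with hy | hy
      · rcases Finset.mem_insert.1 hy with rfl | hy
        · exact Finset.mem_union_right _ hxF
        · exact Finset.mem_union_left _ hy
      · exact Finset.mem_union_right _ hy
    obtain ⟨C, hC, hIC, hCsub, hCcard⟩ := ih (insert x I) hins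
      (by rw [Finset.card_insert_of_notMem hxI]; omega) (hsub'.trans hsub)
    exact ⟨C, hC, (Finset.subset_insert x I).trans hIC, hCsub.trans hsub', hCcard⟩

lemma stepdown {K : Finset (Finset V)} (hK : IsComplex K)
    (hind : ∀ U ⊂ verts K, IsPure (inducedSub K U))
    {F B : Finset V} {x : V}
    (hF : F ∈ facets K) (hB : B ∈ facets K) (hcard : F.card < B.card)
    (hx : x ∈ F) (hxB : x ∉ B) :
    ∃ H ∈ facets K, F.erase x ⊆ H ∧ B.card ≤ H.card := by
  have hxv : x ∈ verts K := subset_verts (facets_subset hF) hx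
  have hU : (verts K).erase x ⊂ verts K := Finset.erase_ssubset hxv
  have hpure := hind _ hU
  have hBf : B ∈ facets (inducedSub K ((verts K).erase x)) :=
    facet_inducedSub hB (Finset.subset_erase.2 ⟨subset_verts (facets_subset hB), hxB⟩)
  have hFe : F.erase x ∈ inducedSub K ((verts K).erase x) := by
    refine Finset.mem_filter.2 ⟨hK F (facets_subset hF) _ (Finset.erase_subset _ _), ?_⟩
    exact Finset.erase_subset_erase _ (subset_verts (facets_subset hF))
  obtain ⟨H₀, hH₀, hFH₀⟩ := exists_facet hFe
  have hcardH₀ : H₀.card = B.card := hpure _ hH₀ _ hBf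
  have hH₀K : H₀ ∈ K := (Finset.mem_filter.1 (facets_subset hH₀)).1
  obtain ⟨H, hH, hH₀H⟩ := exists_facet hH₀K
  exact ⟨H, hH, hFH₀.trans hH₀H, hcardH₀ ▸ Finset.card_le_card hH₀H⟩

/-- If every proper induced subcomplex of a finite simplicial complex `K` is pure,
then `K` is shellable. -/
theorem stmt11 (K : Finset (Finset V)) (hK : IsComplex K)
    (hind : ∀ U ⊂ verts K, IsPure (inducedSub K U)) :
    Shellable K := by
  classical
  letI : LinearOrder V := IsWellOrder.linearOrder WellOrderingRel
  set key : Finset V → ℕᵒᵈ ×ₗ (Colex (Finset V))ᵒᵈ :=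
    fun F => toLex (OrderDual.toDual F.card, OrderDual.toDual (toColex F)) with hkeydef
  have keyinj : Function.Injective key := by
    intro A B h
    rw [hkeydef] at h
    simp only [toLex_inj, Prod.mk.injEq] at h
    exact toColex_inj.1 (OrderDual.toDual.injective h.2)
  have keylt : ∀ A B : Finset V, key A < key B ↔
      (B.card < A.card ∨ (A.card = B.card ∧ toColex B < toColex A)) := by
    intro A B
    rw [hkeydef, Prod.Lex.lt_iff]
    constructor
    · rintro (h | ⟨h1, h2⟩)
      · exact Or.inl (OrderDual.toDual_lt_toDual.1 h)
      · exact Or.inr ⟨(OrderDual.toDual_inj.1 h1), OrderDual.toDual_lt_toDual.1 h2⟩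
    · rintro (h | ⟨h1, h2⟩)
      · exact Or.inl (OrderDual.toDual_lt_toDual.2 h)
      · exact Or.inr ⟨by simp [h1], OrderDual.toDual_lt_toDual.2 h2⟩
  set r : Finset V → Finset V → Prop := fun A B => key A ≤ key B with hrdef
  letI : DecidableRel r := Classical.decRel r
  haveI : IsTrans (Finset V) r := ⟨fun _ _ _ h1 h2 => le_trans h1 h2⟩
  haveI : IsAntisymm (Finset V) r := ⟨fun _ _ h1 h2 => keyinj (le_antisymm h1 h2)⟩
  haveI : IsTotal (Finset V) r := ⟨fun a b => le_total (key a) (key b)⟩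
  set L : List (Finset V) := (facets K).sort r with hLdef
  have hnodup : L.Nodup := Finset.sort_nodup _ r
  have htoF : L.toFinset = facets K := Finset.sort_toFinset _ r
  refine ⟨L, hnodup, htoF, ?_⟩
  intro i _ G hGF ⟨j, hji, hGj⟩
  -- basic facts
  have hmemL : ∀ k : Fin L.length, L.get k ∈ facets K := by
    intro k
    rw [← htoF]
    exact List.mem_toFinset.2 (L.get_mem k)
  have hlt_key : ∀ {k l : Fin L.length}, k < l → key (L.get k) < key (L.get l) := by
    intro k l hkl
    have h1 : r (L.get k) (L.get l) := (Finset.pairwise_sort _ r).rel_get_of_lt hkl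
    have h2 : L.get k ≠ L.get l := fun h => absurd (hnodup.get_inj_iff.1 h) (ne_of_lt hkl)
    exact lt_of_le_of_ne h1 (fun h => h2 (keyinj h))
  have getEarlier : ∀ B ∈ facets K, key B < key (L.get i) →
      ∃ j' : Fin L.length, j' < i ∧ L.get j' = B := by
    intro B hB hkB
    have : B ∈ L := List.mem_toFinset.1 (htoF ▸ hB)
    obtain ⟨j', hj'⟩ := List.mem_iff_get.1 this
    refine ⟨j', ?_, hj'⟩
    rcases lt_trichotomy j' i with h | h | h
    · exact h
    · exact absurd (h ▸ hj') (fun hh => absurd (hh ▸ hkB) (lt_irrefl _))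
    · exact absurd (hj' ▸ hlt_key h) (fun hh => absurd (hkB.trans hh) (lt_irrefl _))
  set F : Finset V := L.get i with hFdef
  set F' : Finset V := L.get j with hF'def
  have hF : F ∈ facets K := hmemL i
  have hF' : F' ∈ facets K := hmemL j
  have hkey : key F' < key F := hlt_key hji
  rw [keylt] at hkey
  rcases hkey with hcard | ⟨hcard, hcolex⟩
  · -- Case 1: F' has strictly larger cardinality
    have hFnF' : ¬ F ⊆ F' := by
      intro h
      have := (mem_facets_iff.1 hF).2 F' (facets_subset hF') h
      rw [this] at hcard; omega
    obtain ⟨x, hxF, hxF'⟩ := Finset.not_subset.1 hFnF'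
    obtain ⟨H₂, hH₂, hFH₂, hcardH₂⟩ := stepdown hK hind hF hF' hcard hxF hxF'
    have hkH₂ : key H₂ < key F := (keylt _ _).2 (Or.inl (by omega))
    obtain ⟨j', hj'i, hj'⟩ := getEarlier H₂ hH₂ hkH₂
    refine ⟨F.erase x, ?_, Finset.erase_subset _ _, ?_, j', hj'i, ?_⟩
    · exact Finset.subset_erase.2 ⟨hGF, fun h => hxF' (hGj h)⟩
    · rw [Finset.card_erase_of_mem hxF]
      have : 0 < F.card := Finset.card_pos.2 ⟨x, hxF⟩
      omega
    · rw [hj']; exact hFH₂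
  · -- Case 2: equal cardinality, Colex.toColex F < Colex.toColex F'
    have hne : F ≠ F' := fun h => absurd (h ▸ hcolex) (lt_irrefl _)
    have hF'nF : (F' \ F).Nonempty := by
      rw [Finset.sdiff_nonempty]
      intro h
      exact hne ((mem_facets_iff.1 hF').2 F (facets_subset hF) h).symm
    set a : V := (F' \ F).max' hF'nF with hadef
    have haF' : a ∈ F' := (Finset.mem_sdiff.1 ((F' \ F).max'_mem hF'nF)).1
    have haF : a ∉ F := (Finset.mem_sdiff.1 ((F' \ F).max'_mem hF'nF)).2
    -- colex consequence: any x ∈ F with x ∉ F' satisfies x ≤ a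
    have hcx : ∀ x ∈ F, x ∉ F' → x ≤ a := by
      intro x hxF hxF'
      obtain ⟨b, hbF', hbF, hxb⟩ := Colex.toColex_le_toColex.1 hcolex.le hxF hxF'
      exact hxb.trans ((F' \ F).le_max' b (Finset.mem_sdiff.2 ⟨hbF', hbF⟩))
    by_cases hins : insert a F = verts K
    · -- degenerate case: verts = F ∪ {a}
      have hsubF' : F' ⊆ insert a F := hins ▸ subset_verts (facets_subset hF')
      have hF'F : F' \ F = {a} := by
        apply Finset.Subset.antisymm
        · intro y hy
          rcases Finset.mem_sdiff.1 hy with ⟨hy1, hy2⟩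
          rcases Finset.mem_insert.1 (hsubF' hy1) with rfl | hy3
          · exact Finset.mem_singleton_self _
          · exact absurd hy3 hy2
        · intro y hy
          rw [Finset.mem_singleton.1 hy]
          exact Finset.mem_sdiff.2 ⟨haF', haF⟩
      have hcard1 : (F \ F').card = 1 := by
        have h1 := Finset.card_sdiff_add_card_inter F F'
        have h2 := Finset.card_sdiff_add_card_inter F' F
        rw [Finset.inter_comm] at h2
        rw [hF'F] at h2
        simp at h2
        omega
      obtain ⟨y, hy⟩ := Finset.card_eq_one.1 hcard1
      have hyF : y ∈ F := (Finset.mem_sdiff.1 (hy ▸ Finset.mem_singleton_self y)).1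
      have hyF' : y ∉ F' := (Finset.mem_sdiff.1 (hy ▸ Finset.mem_singleton_self y)).2
      refine ⟨F.erase y, ?_, Finset.erase_subset _ _, ?_, j, hji, ?_⟩
      · exact Finset.subset_erase.2 ⟨hGF, fun h => hyF' (hGj h)⟩
      · rw [Finset.card_erase_of_mem hyF]
        have : 0 < F.card := Finset.card_pos.2 ⟨y, hyF⟩
        omega
      · intro z hz
        rcases Finset.mem_erase.1 hz with ⟨hz1, hz2⟩
        by_contra hzF'
        have : z ∈ F \ F' := Finset.mem_sdiff.2 ⟨hz2, hzF'⟩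
        rw [hy, Finset.mem_singleton] at this
        exact hz1 this
    · -- main case: insert a F ⊂ verts K
      have hW : insert a F ⊂ verts K := by
        refine Finset.ssubset_iff_subset_ne.2 ⟨?_, hins⟩
        exact Finset.insert_subset (subset_verts (facets_subset hF') haF')
          (subset_verts (facets_subset hF))
      have main : ∀ n (G₀ : Finset V), G₀ ⊆ F → G₀ ⊆ F' → (F \ G₀).card ≤ n →
          ∃ H, G₀ ⊆ H ∧ H ⊆ F ∧ H.card + 1 = F.card ∧
            ∃ j' : Fin L.length, j' < i ∧ H ⊆ L.get j' := by
        intro n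
        induction n with
        | zero =>
          intro G₀ hG₀F hG₀F' hc
          exfalso
          have : F ⊆ G₀ := by
            rw [← Finset.sdiff_eq_empty_iff_subset]
            exact Finset.card_eq_zero.1 (le_antisymm hc (Nat.zero_le _))
          exact hne ((mem_facets_iff.1 hF).2 F' (facets_subset hF') (this.trans hG₀F'))
        | succ n ih =>
          intro G₀ hG₀F hG₀F' hc
          have hG₀ne : G₀ ≠ F := by
            intro h
            exact hne ((mem_facets_iff.1 hF).2 F' (facets_subset hF') (h ▸ hG₀F'))
          have hG₀ss : G₀ ⊂ F := hG₀F.ssubset_of_ne hG₀ne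
          have haG₀ : a ∉ G₀ := fun h => haF (hG₀F h)
          have hI₀K : insert a G₀ ∈ K :=
            hK F' (facets_subset hF') _ (Finset.insert_subset haF' hG₀F')
          have hI₀card : (insert a G₀).card ≤ F.card := by
            rw [Finset.card_insert_of_notMem haG₀]
            exact Nat.succ_le_of_lt (Finset.card_lt_card hG₀ss)
          have hI₀union : insert a G₀ ∪ F = insert a F := by
            ext z
            simp only [Finset.mem_union, Finset.mem_insert]
            constructor
            · rintro ((rfl | h) | h)
              · exact Or.inl rfl
              · exact Or.inr (hG₀F h)
              · exact Or.inr h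
            · rintro (rfl | h)
              · exact Or.inl (Or.inl rfl)
              · exact Or.inr h
          obtain ⟨C, hCK, hI₀C, hCsub, hCcard⟩ := growth hK hind hF hW
            (F.card - (insert a G₀).card) (insert a G₀) hI₀K (by omega)
            (by rw [hI₀union])
          rw [hI₀union] at hCsub
          have haC : a ∈ C := hI₀C (Finset.mem_insert_self a G₀)
          have hG₀C : G₀ ⊆ C := (Finset.subset_insert a G₀).trans hI₀C
          have hCF : C \ F = {a} := by
            apply Finset.Subset.antisymm
            · intro y hy
              rcases Finset.mem_sdiff.1 hy with ⟨hy1, hy2⟩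
              rcases Finset.mem_insert.1 (hCsub hy1) with rfl | hy3
              · exact Finset.mem_singleton_self _
              · exact absurd hy3 hy2
            · intro y hy
              rw [Finset.mem_singleton.1 hy]
              exact Finset.mem_sdiff.2 ⟨haC, haF⟩
          have hFC1 : (F \ C).card = 1 := by
            have h1 := Finset.card_sdiff_add_card_inter F C
            have h2 := Finset.card_sdiff_add_card_inter C F
            rw [Finset.inter_comm] at h2
            rw [hCF] at h2
            simp at h2
            omega
          obtain ⟨x, hx⟩ := Finset.card_eq_one.1 hFC1
          have hxF : x ∈ F := (Finset.mem_sdiff.1 (hx ▸ Finset.mem_singleton_self x)).1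
          have hxC : x ∉ C := (Finset.mem_sdiff.1 (hx ▸ Finset.mem_singleton_self x)).2
          have hxG₀ : x ∉ G₀ := fun h => hxC (hG₀C h)
          have hxa : x ≠ a := fun h => hxC (h ▸ haC)
          have hFeC : F.erase x ⊆ C := by
            intro z hz
            rcases Finset.mem_erase.1 hz with ⟨hz1, hz2⟩
            by_contra hzC
            have : z ∈ F \ C := Finset.mem_sdiff.2 ⟨hz2, hzC⟩
            rw [hx, Finset.mem_singleton] at this
            exact hz1 this
          have hcardFe : (F.erase x).card + 1 = F.card := by
            rw [Finset.card_erase_of_mem hxF]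
            have : 0 < F.card := Finset.card_pos.2 ⟨x, hxF⟩
            omega
          obtain ⟨F'', hF'', hCF''⟩ := exists_facet hCK
          rcases lt_or_ge F.card F''.card with hbig | hsmall
          · -- F'' strictly bigger: earlier by cardinality
            obtain ⟨j', hj'i, hj'⟩ := getEarlier F'' hF''
              ((keylt _ _).2 (Or.inl hbig))
            exact ⟨F.erase x, Finset.subset_erase.2 ⟨hG₀F, hxG₀⟩,
              Finset.erase_subset _ _, hcardFe, j', hj'i, hj' ▸ hFeC.trans hCF''⟩
          · -- F'' = C, so C is a facet
            have hCeq : C = F'' :=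
              Finset.eq_of_subset_of_card_le hCF'' (by omega)
            have hCfacet : C ∈ facets K := hCeq ▸ hF''
            rcases lt_or_ge x a with hxlt | hxge
            · -- x < a : C is earlier in colex order
              have hcolexFC : toColex F < toColex C := by
                apply lt_of_le_of_ne
                · rw [Colex.toColex_le_toColex]
                  intro w hwF hwC
                  have hwx : w = x := by
                    have : w ∈ F \ C := Finset.mem_sdiff.2 ⟨hwF, hwC⟩
                    rw [hx, Finset.mem_singleton] at this
                    exact this
                  exact ⟨a, haC, haF, hwx ▸ hxlt.le⟩
                · intro h
                  exact hxC ((toColex_inj.1 h) ▸ hxF)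
              have hkC : key C < key F := (keylt _ _).2 (Or.inr ⟨hCcard, hcolexFC⟩)
              obtain ⟨j', hj'i, hj'⟩ := getEarlier C hCfacet hkC
              exact ⟨F.erase x, Finset.subset_erase.2 ⟨hG₀F, hxG₀⟩,
                Finset.erase_subset _ _, hcardFe, j', hj'i, hj' ▸ hFeC⟩
            · -- a < x : x must be in F', recurse with larger G₀
              have hax : a < x := lt_of_le_of_ne hxge (fun h => hxa h.symm)
              have hxF' : x ∈ F' := by
                by_contra h
                exact absurd (hcx x hxF h) (not_le.2 hax)
              have hsd : F \ insert x G₀ = (F \ G₀).erase x := by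
                ext z
                simp only [Finset.mem_sdiff, Finset.mem_erase, Finset.mem_insert]
                tauto
              have hxFG : x ∈ F \ G₀ := Finset.mem_sdiff.2 ⟨hxF, hxG₀⟩
              have hcard' : (F \ insert x G₀).card ≤ n := by
                rw [hsd, Finset.card_erase_of_mem hxFG]
                have : 0 < (F \ G₀).card := Finset.card_pos.2 ⟨x, hxFG⟩
                omega
              obtain ⟨H, hGH, hHF, hHc, j', hj'i, hj'⟩ := ih (insert x G₀)
                (Finset.insert_subset hxF hG₀F) (Finset.insert_subset hxF' hG₀F') hcard'
              exact ⟨H, (Finset.subset_insert x G₀).trans hGH, hHF, hHc, j', hj'i, hj'⟩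
      exact main (F \ G).card G hGF hGj le_rfl
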